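/- arXiv:2510.15070 — 2 statements merged into one kernel-verified Lean document; each statement's English description precedes it below -/
import Mathlib

section
/- (Theorem 2, first bullet, matrix form.) Let M ≥ 1 be an integer, Ũ ∈ ℂ^{M×M} with ŨᴴŨ = I_M, W₁, W₂ ∈ ℂ^{M×M} unitary, and α₁, α₂ ∈ (0, π/2) with α₁ ≠ α₂. Define G_i = [cos(α_i)·Ũ ; sin(α_i)·W_i] ∈ ℂ^{2M×M} and Γ = G₁ᴴG₂. Then I_M − ΓᴴΓ is positive definite; equivalently, every singular value of Γ is strictly less than 1, i.e., all the principal angles between the subspaces span(G₁) and span(G₂) are nonzero. -/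
open Matrix
open scoped ComplexOrder

/-! Because `Ũᴴ Ũ = I`, the cross-Gram matrix is `Γ = cos α₁ cos α₂ • I + sin α₁ sin α₂ • W₁ᴴ W₂`,
and `W₁ᴴ W₂` is an isometry of `ℂ^M`. Hence
`‖Γ x‖ ≤ (cos α₁ cos α₂ + sin α₁ sin α₂) ‖x‖ = cos (α₁ - α₂) ‖x‖ < ‖x‖` for `x ≠ 0`, which is
positivity of `xᴴ (I - Γᴴ Γ) x = ‖x‖² - ‖Γ x‖²`. -/

open WithLp

section EuclideanNorm

variable {𝕜 : Type*} [RCLike 𝕜] {n : Type*} [Fintype n]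

lemma star_dotProduct_self_eq_norm_sq (v : n → 𝕜) :
    star v ⬝ᵥ v = ((‖toLp 2 v‖ ^ 2 : ℝ) : 𝕜) := by
  rw [RCLike.ofReal_pow, ← inner_self_eq_norm_sq_to_K, EuclideanSpace.inner_toLp_toLp,
    dotProduct_comm]

variable [DecidableEq n]

lemma norm_toLp_mulVec_of_conjTranspose_mul_self_eq_one {Q : Matrix n n 𝕜} (hQ : Qᴴ * Q = 1)
    (v : n → 𝕜) : ‖toLp 2 (Q *ᵥ v)‖ = ‖toLp 2 v‖ := by
  have hsq : ‖toLp 2 (Q *ᵥ v)‖ ^ 2 = ‖toLp 2 v‖ ^ 2 := by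
    apply RCLike.ofReal_injective (K := 𝕜)
    rw [← star_dotProduct_self_eq_norm_sq, ← star_dotProduct_self_eq_norm_sq, star_mulVec,
      dotProduct_mulVec, vecMul_vecMul, hQ, vecMul_one]
  exact (pow_left_inj₀ (norm_nonneg _) (norm_nonneg _) two_ne_zero).mp hsq

lemma norm_toLp_smul_one_add_smul_mulVec_le {Q : Matrix n n 𝕜} (hQ : Qᴴ * Q = 1) (a b : 𝕜)
    (v : n → 𝕜) :
    ‖toLp 2 ((a • 1 + b • Q) *ᵥ v)‖ ≤ (‖a‖ + ‖b‖) * ‖toLp 2 v‖ := by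
  rw [add_mulVec, smul_mulVec, smul_mulVec, one_mulVec, toLp_add, toLp_smul, toLp_smul,
    add_mul]
  refine (norm_add_le _ _).trans ?_
  rw [norm_smul, norm_smul, norm_toLp_mulVec_of_conjTranspose_mul_self_eq_one hQ]

lemma posDef_one_sub_conjTranspose_mul_self {Γ : Matrix n n 𝕜}
    (h : ∀ v ≠ 0, ‖toLp 2 (Γ *ᵥ v)‖ < ‖toLp 2 v‖) : (1 - Γᴴ * Γ).PosDef := by
  refine posDef_iff_dotProduct_mulVec.mpr
    ⟨isHermitian_one.sub (isHermitian_conjTranspose_mul_self Γ), fun v hv => ?_⟩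
  have hform : star v ⬝ᵥ ((1 - Γᴴ * Γ) *ᵥ v) = star v ⬝ᵥ v - star (Γ *ᵥ v) ⬝ᵥ (Γ *ᵥ v) := by
    rw [sub_mulVec, dotProduct_sub, one_mulVec, ← mulVec_mulVec, dotProduct_mulVec,
      ← star_mulVec]
  rw [hform, star_dotProduct_self_eq_norm_sq, star_dotProduct_self_eq_norm_sq,
    ← RCLike.ofReal_sub, RCLike.ofReal_pos, sub_pos]
  exact pow_lt_pow_left₀ (h v hv) (norm_nonneg _) two_ne_zero

end EuclideanNorm

lemma fromRows_conjTranspose_mul_fromRows {R m₁ m₂ n k : Type*} [Fintype m₁] [Fintype m₂]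
    [Semiring R] [StarRing R]
    (A₁ : Matrix m₁ n R) (A₂ : Matrix m₂ n R) (B₁ : Matrix m₁ k R) (B₂ : Matrix m₂ k R) :
    (fromRows A₁ A₂)ᴴ * fromRows B₁ B₂ = A₁ᴴ * B₁ + A₂ᴴ * B₂ := by
  rw [conjTranspose_fromRows_eq_fromCols_conjTranspose, fromCols_mul_fromRows]

lemma abs_cos_mul_cos_add_abs_sin_mul_sin_lt_one {α₁ α₂ : ℝ}
    (hα₁ : α₁ ∈ Set.Ioo 0 (Real.pi / 2)) (hα₂ : α₂ ∈ Set.Ioo 0 (Real.pi / 2)) (hne : α₁ ≠ α₂) :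
    |Real.cos α₁ * Real.cos α₂| + |Real.sin α₁ * Real.sin α₂| < 1 := by
  have hcos : ∀ α ∈ Set.Ioo 0 (Real.pi / 2), 0 < Real.cos α := fun α hα =>
    Real.cos_pos_of_mem_Ioo ⟨by linarith [hα.1, Real.pi_pos], hα.2⟩
  have hsin : ∀ α ∈ Set.Ioo 0 (Real.pi / 2), 0 < Real.sin α := fun α hα =>
    Real.sin_pos_of_pos_of_lt_pi hα.1 (by linarith [hα.2, Real.pi_pos])
  rw [abs_of_pos (mul_pos (hcos α₁ hα₁) (hcos α₂ hα₂)),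
    abs_of_pos (mul_pos (hsin α₁ hα₁) (hsin α₂ hα₂)), ← Real.cos_sub]
  refine (Real.cos_le_one _).lt_of_ne fun h => hne ?_
  have := (Real.cos_eq_one_iff_of_lt_of_lt (x := α₁ - α₂)
    (by linarith [hα₁.1, hα₂.2, Real.pi_pos]) (by linarith [hα₁.2, hα₂.1, Real.pi_pos])).mp h
  linarith

theorem stmt_9_general (M : ℕ)
    (U W₁ W₂ : Matrix (Fin M) (Fin M) ℂ)
    (hU : Uᴴ * U = 1)
    (hW₁' : W₁ * W₁ᴴ = 1)
    (hW₂ : W₂ᴴ * W₂ = 1)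
    (α₁ α₂ : ℝ)
    (hα₁ : α₁ ∈ Set.Ioo (0 : ℝ) (Real.pi / 2))
    (hα₂ : α₂ ∈ Set.Ioo (0 : ℝ) (Real.pi / 2))
    (hne : α₁ ≠ α₂)
    (G₁ G₂ : Matrix (Fin M ⊕ Fin M) (Fin M) ℂ)
    (hG₁ : G₁ = Matrix.fromRows
      (((Real.cos α₁ : ℝ) : ℂ) • U) (((Real.sin α₁ : ℝ) : ℂ) • W₁))
    (hG₂ : G₂ = Matrix.fromRows
      (((Real.cos α₂ : ℝ) : ℂ) • U) (((Real.sin α₂ : ℝ) : ℂ) • W₂))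
    (Γ : Matrix (Fin M) (Fin M) ℂ)
    (hΓ : Γ = G₁ᴴ * G₂) :
    (1 - Γᴴ * Γ).PosDef := by
  have hQ : (W₁ᴴ * W₂)ᴴ * (W₁ᴴ * W₂) = 1 := by
    rw [conjTranspose_mul, conjTranspose_conjTranspose, Matrix.mul_assoc,
      ← Matrix.mul_assoc W₁, hW₁', Matrix.one_mul, hW₂]
  have hΓ' : Γ = ((Real.cos α₁ * Real.cos α₂ : ℝ) : ℂ) • 1
      + ((Real.sin α₁ * Real.sin α₂ : ℝ) : ℂ) • (W₁ᴴ * W₂) := by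
    rw [hΓ, hG₁, hG₂, fromRows_conjTranspose_mul_fromRows]
    simp only [conjTranspose_smul, Complex.star_def, Complex.conj_ofReal, smul_mul_smul_comm,
      hU, Complex.ofReal_mul]
  refine posDef_one_sub_conjTranspose_mul_self fun v hv => ?_
  calc ‖toLp 2 (Γ *ᵥ v)‖
      ≤ (|Real.cos α₁ * Real.cos α₂| + |Real.sin α₁ * Real.sin α₂|) * ‖toLp 2 v‖ := by
        simpa only [hΓ', Complex.norm_real, Real.norm_eq_abs] using
          norm_toLp_smul_one_add_smul_mulVec_le hQ ((Real.cos α₁ * Real.cos α₂ : ℝ) : ℂ)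
            ((Real.sin α₁ * Real.sin α₂ : ℝ) : ℂ) v
    _ < ‖toLp 2 v‖ :=
        mul_lt_of_lt_one_left (norm_pos_iff.mpr ((WithLp.toLp_eq_zero 2).not.mpr hv))
          (abs_cos_mul_cos_add_abs_sin_mul_sin_lt_one hα₁ hα₂ hne)

/-- Theorem 2, first bullet, matrix form: for `α₁ ≠ α₂` in `(0, π/2)`,
with `G_i = [cos(α_i)·Ũ ; sin(α_i)·W_i]` and `Γ = G₁ᴴ G₂`, the matrix `I_M − Γᴴ Γ`
is positive definite (every singular value of `Γ` is `< 1`, i.e. all principal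
angles between `span(G₁)` and `span(G₂)` are nonzero). -/
theorem stmt_9 (M : ℕ) (hM : 1 ≤ M)
    (U W₁ W₂ : Matrix (Fin M) (Fin M) ℂ)
    (hU : Uᴴ * U = 1)
    (hW₁ : W₁ᴴ * W₁ = 1) (hW₁' : W₁ * W₁ᴴ = 1)
    (hW₂ : W₂ᴴ * W₂ = 1) (hW₂' : W₂ * W₂ᴴ = 1)
    (α₁ α₂ : ℝ)
    (hα₁ : α₁ ∈ Set.Ioo (0 : ℝ) (Real.pi / 2))
    (hα₂ : α₂ ∈ Set.Ioo (0 : ℝ) (Real.pi / 2))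
    (hne : α₁ ≠ α₂)
    (G₁ G₂ : Matrix (Fin M ⊕ Fin M) (Fin M) ℂ)
    (hG₁ : G₁ = Matrix.fromRows
      (((Real.cos α₁ : ℝ) : ℂ) • U) (((Real.sin α₁ : ℝ) : ℂ) • W₁))
    (hG₂ : G₂ = Matrix.fromRows
      (((Real.cos α₂ : ℝ) : ℂ) • U) (((Real.sin α₂ : ℝ) : ℂ) • W₂))
    (Γ : Matrix (Fin M) (Fin M) ℂ)
    (hΓ : Γ = G₁ᴴ * G₂) :
    (1 - Γᴴ * Γ).PosDef :=
  stmt_9_general M U W₁ W₂ hU hW₁' hW₂ α₁ α₂ hα₁ hα₂ hne G₁ G₂ hG₁ hG₂ Γ hΓ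
end

section
/- Let M ≥ 1 be an integer, ω = exp(2πi/M), D = diag(1, ω, …, ω^{M−1}) the clock matrix, S the cyclic shift matrix (S_{jk} = 1 if j ≡ k + 1 (mod M), else 0), and i the imaginary unit. For 0 ≤ a, b < M and ε ∈ {0, 1}, define Δ_{a,b,ε} = [0_M ; (i^ε/√M)·DᵃSᵇ] ∈ ℂ^{2M×M} (zero upper block). Then these 2M² matrices form an orthonormal family with respect to the real inner product g(A, B) = Re tr(AᴴB): g(Δ_{a,b,ε}, Δ_{c,d,δ}) = 1 if (a,b,ε) = (c,d,δ) and 0 otherwise. Moreover, each Δ = Δ_{a,b,ε} satisfies [I_M ; 0_M]ᴴ·Δ = 0 and ΔᴴΔ = (1/M)·I_M, so Δ lies in the tangent space at [U], U = [I_M ; 0_M], and √M·Δ̃ is unitary (the hypotheses of Theorem 1). Hence the family is a g-orthonormal basis of the 2M²-dimensional real tangent space T_{[U]}Gr_ℂ(2M,M). -/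
/-
The Weyl matrices `W a b = Dᵃ Sᵇ` are unitary, and they are orthogonal for the pairing
`tr (Aᴴ B)`: the entries of `(W a b)ᴴ (W c d)` on the diagonal vanish unless `b = d`, and then
the trace is the geometric sum `∑ₖ ζ ^ k` with `ζ = conj (ω ^ a) * ω ^ c = ω ^ (c - a)`, which
vanishes unless `a = c`. Hence the `M²` Weyl matrices are a `ℂ`-basis of the `M × M` matrices,
so multiplying them by `1` and `i` gives an `ℝ`-basis; `1 / √M` normalises them, and `1, i` are
orthonormal for `Re (conj z * w)`. The tangent vectors at `[I ; 0]` are exactly the matrices with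
zero upper block, which makes the family span the tangent space.
-/

open Matrix

theorem Nat.add_mod_eq_add_mod_left_iff {M b d : ℕ} (k : ℕ) (hb : b < M) (hd : d < M) :
    (k + b) % M = (k + d) % M ↔ b = d :=
  ⟨fun h => (Nat.ModEq.add_left_cancel' k h).eq_of_lt_of_lt hb hd, fun h => h ▸ rfl⟩

theorem Fin.sum_pow_eq_zero_of_pow_eq_one {K : Type*} [Field K] {M : ℕ} {ζ : K} (h : ζ ^ M = 1)
    (h1 : ζ ≠ 1) : ∑ k : Fin M, ζ ^ (k : ℕ) = 0 := by
  rw [Fin.sum_univ_eq_sum_range, geom_sum_eq h1, h, sub_self, zero_div]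

theorem Complex.mem_unitary_of_pow_eq_one {ω : ℂ} {M : ℕ} (h : ω ^ M = 1) (hM : M ≠ 0) :
    ω ∈ unitary ℂ := by
  rw [Unitary.mem_iff_star_mul_self]
  simp [Complex.conj_mul', Complex.norm_eq_one_of_pow_eq_one h hM]

theorem Complex.I_pow_mem_unitary (n : ℕ) : Complex.I ^ n ∈ unitary ℂ :=
  pow_mem (by rw [Unitary.mem_iff_star_mul_self]; simp) n

theorem Complex.re_star_I_pow_mul_I_pow (ε δ : Fin 2) :
    (star (Complex.I ^ (ε : ℕ)) * Complex.I ^ (δ : ℕ)).re = if ε = δ then 1 else 0 := by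
  fin_cases ε <;> fin_cases δ <;> simp

section ClockShift

variable {R : Type*} (M : ℕ)

def shiftMatrix [Zero R] [One R] : Matrix (Fin M) (Fin M) R :=
  of fun j k => if (j : ℕ) = ((k : ℕ) + 1) % M then 1 else 0

def clockMatrix [Monoid R] [Zero R] (ω : R) : Matrix (Fin M) (Fin M) R :=
  diagonal fun j => ω ^ (j : ℕ)

def weylMatrix [Semiring R] (ω : R) (a b : ℕ) : Matrix (Fin M) (Fin M) R :=
  clockMatrix M ω ^ a * shiftMatrix M ^ b

variable {M}

theorem shiftMatrix_pow_apply [Semiring R] (b : ℕ) (j k : Fin M) :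
    (shiftMatrix M ^ b : Matrix (Fin M) (Fin M) R) j k =
      if (j : ℕ) = ((k : ℕ) + b) % M then 1 else 0 := by
  induction b generalizing k with
  | zero => simp [one_apply, Fin.ext_iff, Nat.mod_eq_of_lt k.isLt]
  | succ b ih =>
    rw [pow_succ, mul_apply, Finset.sum_eq_single ⟨((k : ℕ) + 1) % M, Nat.mod_lt _ k.pos⟩]
    · rw [ih]
      simp [shiftMatrix, Nat.add_assoc, Nat.add_comm 1 b]
    · intro l _ hl
      rw [Ne, Fin.ext_iff] at hl
      simp [shiftMatrix, hl]
    · simp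

theorem weylMatrix_apply [CommSemiring R] (ω : R) (a b : ℕ) (j k : Fin M) :
    weylMatrix M ω a b j k = if (j : ℕ) = ((k : ℕ) + b) % M then (ω ^ a) ^ (j : ℕ) else 0 := by
  simp [weylMatrix, clockMatrix, diagonal_pow, shiftMatrix_pow_apply, ← pow_mul, mul_comm a]

theorem conjTranspose_weylMatrix_mul_weylMatrix_apply [CommSemiring R] [StarRing R] (ω : R)
    (a b c d : ℕ) (k l : Fin M) :
    ((weylMatrix M ω a b)ᴴ * weylMatrix M ω c d) k l =
      if ((k : ℕ) + b) % M = ((l : ℕ) + d) % M then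
        (star (ω ^ a) * ω ^ c) ^ (((k : ℕ) + b) % M) else 0 := by
  rw [mul_apply, Finset.sum_eq_single ⟨((k : ℕ) + b) % M, Nat.mod_lt _ k.pos⟩]
  · simp [weylMatrix_apply, mul_pow]
  · intro j _ hj
    rw [Ne, Fin.ext_iff] at hj
    simp [weylMatrix_apply, hj]
  · simp

theorem weylMatrix_mem_unitaryGroup [CommRing R] [StarRing R] {ω : R} (hω : ω ∈ unitary R)
    (a b : ℕ) : weylMatrix M ω a b ∈ unitaryGroup (Fin M) R := by
  rw [mem_unitaryGroup_iff']
  ext k l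
  rw [star_eq_conjTranspose, conjTranspose_weylMatrix_mul_weylMatrix_apply,
    Unitary.star_mul_self_of_mem (pow_mem hω a), one_pow, add_comm (k : ℕ), add_comm (l : ℕ)]
  simp only [Nat.add_mod_eq_add_mod_left_iff b k.isLt l.isLt, one_apply, Fin.val_inj]

theorem trace_conjTranspose_weylMatrix_mul_weylMatrix [Field R] [StarRing R] {ω : R}
    (hω : IsPrimitiveRoot ω M) (hωu : ω ∈ unitary R) (a b c d : Fin M) :
    ((weylMatrix M ω a b)ᴴ * weylMatrix M ω c d).trace = if a = c ∧ b = d then (M : R) else 0 := by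
  set ζ := star (ω ^ (a : ℕ)) * ω ^ (c : ℕ) with hζ
  have hstar : star (ω ^ (a : ℕ)) = (ω ^ (a : ℕ))⁻¹ :=
    eq_inv_of_mul_eq_one_left (Unitary.star_mul_self_of_mem (pow_mem hωu _))
  have hζM : ζ ^ M = 1 := by
    rw [hζ, hstar, mul_pow, inv_pow, ← pow_mul, ← pow_mul, mul_comm (a : ℕ), mul_comm (c : ℕ),
      pow_mul, pow_mul, hω.pow_eq_one, one_pow, one_pow, inv_one, one_mul]
  have hζ1 : ζ = 1 ↔ a = c := by
    rw [hζ, hstar, inv_mul_eq_one₀ (pow_ne_zero _ (hω.ne_zero (Fin.pos a).ne')), Fin.ext_iff]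
    exact ⟨fun h => hω.pow_inj a.isLt c.isLt h, fun h => h ▸ rfl⟩
  simp only [trace, diag, conjTranspose_weylMatrix_mul_weylMatrix_apply,
    Nat.add_mod_eq_add_mod_left_iff _ b.isLt d.isLt, Fin.val_inj, ← hζ]
  by_cases hbd : b = d
  · subst hbd
    have hshift : ∑ k : Fin M, ζ ^ (((k : ℕ) + b) % M) =
        (∑ k : Fin M, ζ ^ (k : ℕ)) * ζ ^ (b : ℕ) := by
      simp only [← pow_eq_pow_mod _ hζM, pow_add, Finset.sum_mul]
    simp only [if_true, and_true, hshift]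
    by_cases hac : a = c
    · simp [hζ1.mpr hac, hac]
    · rw [Fin.sum_pow_eq_zero_of_pow_eq_one hζM (hζ1.not.mpr hac), zero_mul, if_neg hac]
  · simp [hbd]

theorem linearIndependent_weylMatrix [Field R] [StarRing R] [CharZero R] {ω : R}
    (hω : IsPrimitiveRoot ω M) (hωu : ω ∈ unitary R) :
    LinearIndependent R fun p : Fin M × Fin M => weylMatrix M ω p.1 p.2 := by
  rw [Fintype.linearIndependent_iff]
  intro g hg p
  have h := congrArg (fun X => ((weylMatrix M ω p.1 p.2)ᴴ * X).trace) hg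
  simp only [Matrix.mul_sum, trace_sum, Matrix.mul_smul, trace_smul,
    trace_conjTranspose_weylMatrix_mul_weylMatrix hω hωu, ← Prod.ext_iff, smul_eq_mul,
    mul_ite, mul_zero, Finset.sum_ite_eq, Finset.mem_univ, if_true,
    trace_zero] at h
  exact (mul_eq_zero.mp h).resolve_right (Nat.cast_ne_zero.mpr (Fin.pos p.1).ne')

theorem span_weylMatrix_eq_top [Field R] [StarRing R] [CharZero R] {ω : R}
    (hω : IsPrimitiveRoot ω M) (hωu : ω ∈ unitary R) :
    Submodule.span R (Set.range fun p : Fin M × Fin M => weylMatrix M ω p.1 p.2) = ⊤ :=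
  (linearIndependent_weylMatrix hω hωu).span_eq_top_of_card_eq_finrank'
    (by simp [Module.finrank_matrix])

end ClockShift

section Blocks
variable {R m₁ m₂ n n' : Type*}

theorem Matrix.conjTranspose_fromRows_mul_fromRows [Semiring R] [Star R] [Fintype m₁]
    [Fintype m₂] (A₁ : Matrix m₁ n R) (A₂ : Matrix m₂ n R) (B₁ : Matrix m₁ n' R)
    (B₂ : Matrix m₂ n' R) : (fromRows A₁ A₂)ᴴ * fromRows B₁ B₂ = A₁ᴴ * B₁ + A₂ᴴ * B₂ := by
  rw [conjTranspose_fromRows_eq_fromCols_conjTranspose, fromCols_mul_fromRows]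

theorem Matrix.conjTranspose_fromRows_one_zero_mul [Semiring R] [StarRing R] [Fintype m₁]
    [Fintype m₂] [DecidableEq m₁] (X : Matrix (m₁ ⊕ m₂) n R) :
    ((fromRows 1 0)ᴴ : Matrix m₁ (m₁ ⊕ m₂) R) * X = X.toRows₁ := by
  nth_rw 1 [← fromRows_toRows X]
  rw [conjTranspose_fromRows_mul_fromRows]
  simp

theorem Matrix.fromRows_zero_sum [AddCommMonoid R] {ι : Type*} (s : Finset ι)
    (Y : ι → Matrix m₂ n R) :
    fromRows (0 : Matrix m₁ n R) (∑ i ∈ s, Y i) = ∑ i ∈ s, fromRows 0 (Y i) := by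
  ext (_ | _) _ <;> simp [Matrix.sum_apply]

end Blocks

section WeylFrame

variable {M : ℕ} {ω : ℂ}

noncomputable def weylFrame (M : ℕ) (ω : ℂ) (p : Fin M × Fin M × Fin 2) :
    Matrix (Fin M ⊕ Fin M) (Fin M) ℂ :=
  fromRows 0 ((Complex.I ^ (p.2.2 : ℕ) * (((√M)⁻¹ : ℝ) : ℂ)) • weylMatrix M ω p.1 p.2.1)

theorem conjTranspose_weylFrame_mul_weylFrame (p q : Fin M × Fin M × Fin 2) :
    (weylFrame M ω p)ᴴ * weylFrame M ω q =
      (star (Complex.I ^ (p.2.2 : ℕ)) * Complex.I ^ (q.2.2 : ℕ) * (M : ℂ)⁻¹) •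
        ((weylMatrix M ω p.1 p.2.1)ᴴ * weylMatrix M ω q.1 q.2.1) := by
  have hs : star (((√M)⁻¹ : ℝ) : ℂ) * (((√M)⁻¹ : ℝ) : ℂ) = (M : ℂ)⁻¹ := by
    rw [Complex.star_def, Complex.conj_ofReal, ← Complex.ofReal_mul, ← mul_inv,
      Real.mul_self_sqrt (Nat.cast_nonneg M)]
    push_cast; rfl
  rw [weylFrame, weylFrame, conjTranspose_fromRows_mul_fromRows, ← hs]
  simp only [conjTranspose_zero, Matrix.zero_mul, zero_add, conjTranspose_smul,
    Matrix.smul_mul, Matrix.mul_smul, smul_smul, star_mul']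
  ring_nf

theorem re_trace_conjTranspose_weylFrame_mul_weylFrame (hω : IsPrimitiveRoot ω M)
    (hωu : ω ∈ unitary ℂ) (p q : Fin M × Fin M × Fin 2) :
    ((weylFrame M ω p)ᴴ * weylFrame M ω q).trace.re = if p = q then 1 else 0 := by
  obtain ⟨a, b, ε⟩ := p
  obtain ⟨c, d, δ⟩ := q
  rw [conjTranspose_weylFrame_mul_weylFrame, trace_smul,
    trace_conjTranspose_weylMatrix_mul_weylMatrix hω hωu]
  by_cases habcd : a = c ∧ b = d
  · obtain ⟨rfl, rfl⟩ := habcd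
    rw [if_pos ⟨rfl, rfl⟩, smul_eq_mul, mul_assoc, inv_mul_cancel₀ (Nat.cast_ne_zero.mpr a.pos.ne'),
      mul_one, Complex.re_star_I_pow_mul_I_pow]
    simp
  · rw [if_neg habcd, smul_zero, Complex.zero_re, if_neg (by rintro ⟨⟩; exact habcd ⟨rfl, rfl⟩)]

theorem conjTranspose_weylFrame_mul_self (hωu : ω ∈ unitary ℂ) (p : Fin M × Fin M × Fin 2) :
    (weylFrame M ω p)ᴴ * weylFrame M ω p = (M : ℂ)⁻¹ • 1 := by
  rw [conjTranspose_weylFrame_mul_weylFrame, ← star_eq_conjTranspose,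
    mem_unitaryGroup_iff'.mp (weylMatrix_mem_unitaryGroup hωu _ _),
    Unitary.star_mul_self_of_mem (Complex.I_pow_mem_unitary _), one_mul]

theorem sqrt_smul_toRows₂_weylFrame_mem_unitary (hωu : ω ∈ unitary ℂ)
    (p : Fin M × Fin M × Fin 2) :
    ((√M : ℝ) : ℂ) • (weylFrame M ω p).toRows₂ ∈ unitary (Matrix (Fin M) (Fin M) ℂ) := by
  have hscaled : ((√M : ℝ) : ℂ) • (weylFrame M ω p).toRows₂ =
      Complex.I ^ (p.2.2 : ℕ) • weylMatrix M ω p.1 p.2.1 := by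
    rw [weylFrame, toRows₂_fromRows, smul_smul, mul_left_comm, ← Complex.ofReal_mul,
      mul_inv_cancel₀ (by simp [p.1.pos.ne']), Complex.ofReal_one, mul_one]
  rw [hscaled]
  exact Unitary.smul_mem ⟨_, Complex.I_pow_mem_unitary _⟩ (weylMatrix_mem_unitaryGroup hωu _ _)

theorem fromRows_zero_smul_weylMatrix_mem_span_weylFrame (a b : Fin M) (z : ℂ) :
    fromRows 0 (z • weylMatrix M ω a b) ∈ Submodule.span ℝ (Set.range (weylFrame M ω)) := by
  have hsplit : fromRows 0 (z • weylMatrix M ω a b) =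
      (√M * z.re) • weylFrame M ω (a, b, 0) + (√M * z.im) • weylFrame M ω (a, b, 1) := by
    have hsqrt : (√M : ℂ) ≠ 0 := by simp [a.pos.ne']
    ext (i | i) j
    · simp [weylFrame]
    · simp only [weylFrame, fromRows_apply_inr, Matrix.add_apply, Matrix.smul_apply, smul_eq_mul,
        Complex.real_smul, Complex.ofReal_mul, Complex.ofReal_inv, Fin.isValue,
        Fin.coe_ofNat_eq_mod, Nat.zero_mod, Nat.mod_succ, pow_zero, pow_one, one_mul]
      linear_combination (-weylMatrix M ω a b i j) * Complex.re_add_im z -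
        ((z.re : ℂ) + z.im * Complex.I) * weylMatrix M ω a b i j * mul_inv_cancel₀ hsqrt
  rw [hsplit]
  exact add_mem (Submodule.smul_mem _ _ (Submodule.subset_span ⟨_, rfl⟩))
    (Submodule.smul_mem _ _ (Submodule.subset_span ⟨_, rfl⟩))

theorem fromRows_zero_mem_span_weylFrame (hω : IsPrimitiveRoot ω M) (hωu : ω ∈ unitary ℂ)
    (Y : Matrix (Fin M) (Fin M) ℂ) :
    fromRows 0 Y ∈ Submodule.span ℝ (Set.range (weylFrame M ω)) := by
  have hY : Y ∈ Submodule.span ℂ (Set.range fun p : Fin M × Fin M => weylMatrix M ω p.1 p.2) := by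
    rw [span_weylMatrix_eq_top hω hωu]; trivial
  obtain ⟨c, rfl⟩ := (Submodule.mem_span_range_iff_exists_fun ℂ).mp hY
  rw [fromRows_zero_sum]
  exact Submodule.sum_mem _ fun p _ => fromRows_zero_smul_weylMatrix_mem_span_weylFrame _ _ _

end WeylFrame

/-- The `2M²` matrices `Δ_{a,b,ε} = [0_M ; (i^ε/√M)·DᵃSᵇ]`
(`0 ≤ a, b < M`, `ε ∈ {0,1}`, `D` the clock matrix, `S` the cyclic shift matrix)
form a `g`-orthonormal family w.r.t. `g(A,B) = Re tr(Aᴴ B)`; each of them lies in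
the tangent space `{Δ : Uᴴ Δ = 0}` at `U = [I_M ; 0_M]`, satisfies
`Δᴴ Δ = (1/M)·I_M` with `√M·Δ̃` (the rescaled lower block) unitary (the
hypotheses of Theorem 1), and the family spans the `2M²`-dimensional real
tangent space; hence it is a `g`-orthonormal basis of `T_{[U]}Gr_ℂ(2M,M)`. -/
theorem stmt_16 (M : ℕ) (hM : 1 ≤ M)
    (ω : ℂ) (hω : ω = Complex.exp (2 * Real.pi * Complex.I / M))
    (D S : Matrix (Fin M) (Fin M) ℂ)
    (hD : D = Matrix.diagonal (fun j : Fin M => ω ^ (j : ℕ)))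
    (hS : S = Matrix.of (fun j k : Fin M =>
      if (j : ℕ) = ((k : ℕ) + 1) % M then (1 : ℂ) else 0))
    (Δ : Fin M × Fin M × Fin 2 → Matrix (Fin M ⊕ Fin M) (Fin M) ℂ)
    (hΔ : ∀ a b : Fin M, ∀ ε : Fin 2, Δ (a, b, ε) =
      Matrix.fromRows (0 : Matrix (Fin M) (Fin M) ℂ)
        ((Complex.I ^ (ε : ℕ) * (((Real.sqrt M)⁻¹ : ℝ) : ℂ)) • (D ^ (a : ℕ) * S ^ (b : ℕ))))
    (Δt : Fin M × Fin M × Fin 2 → Matrix (Fin M) (Fin M) ℂ)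
    (hΔt : ∀ p, Δt p = Matrix.of (fun i j : Fin M => Δ p (Sum.inr i) j))
    (Ubig : Matrix (Fin M ⊕ Fin M) (Fin M) ℂ)
    (hUbig : Ubig = Matrix.fromRows (1 : Matrix (Fin M) (Fin M) ℂ) 0) :
    -- g-orthonormality of the family
    (∀ p q : Fin M × Fin M × Fin 2,
      (((Δ p)ᴴ * Δ q).trace).re = if p = q then 1 else 0) ∧
    -- each Δ lies in the tangent space at [U]
    (∀ p, Ubigᴴ * Δ p = 0) ∧
    -- each Δ satisfies Δᴴ Δ = (1/M)·I_M
    (∀ p, (Δ p)ᴴ * Δ p = ((M : ℂ))⁻¹ • 1) ∧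
    -- √M · Δ̃ is unitary
    (∀ p, (((Real.sqrt M : ℝ) : ℂ) • Δt p)ᴴ * (((Real.sqrt M : ℝ) : ℂ) • Δt p) = 1 ∧
      (((Real.sqrt M : ℝ) : ℂ) • Δt p) * (((Real.sqrt M : ℝ) : ℂ) • Δt p)ᴴ = 1) ∧
    -- the family spans the real tangent space {Δ : Uᴴ Δ = 0}
    (∀ X : Matrix (Fin M ⊕ Fin M) (Fin M) ℂ, Ubigᴴ * X = 0 →
      X ∈ Submodule.span ℝ (Set.range Δ)) := by
  have hprim : IsPrimitiveRoot ω M := hω ▸ Complex.isPrimitiveRoot_exp M (by omega)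
  have hωu : ω ∈ unitary ℂ := Complex.mem_unitary_of_pow_eq_one hprim.pow_eq_one (by omega)
  subst hD hS hUbig
  obtain rfl : Δ = weylFrame M ω := funext fun ⟨a, b, ε⟩ => hΔ a b ε
  obtain rfl : Δt = fun p => (weylFrame M ω p).toRows₂ := funext hΔt
  refine ⟨re_trace_conjTranspose_weylFrame_mul_weylFrame hprim hωu, fun p => ?_,
    conjTranspose_weylFrame_mul_self hωu,
    fun p => Unitary.mem_iff.mp (sqrt_smul_toRows₂_weylFrame_mem_unitary hωu p), fun X hX => ?_⟩
  · rw [conjTranspose_fromRows_one_zero_mul, weylFrame, toRows₁_fromRows]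
  · rw [conjTranspose_fromRows_one_zero_mul] at hX
    rw [← fromRows_toRows X, hX]
    exact fromRows_zero_mem_span_weylFrame hprim hωu X.toRows₂
end
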